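/- Let L be a generator on a finite poset S with λ* = max_{x∈S}(−L(x,x)) > 0. The transition semigroup P_t = exp(tL) is stochastically monotone if and only if there exists λ ≥ λ* such that the stochastic matrix Q_λ(x,y) = I(x,y) + L(x,y)/λ is stochastically monotone, i.e., Q_λ(x,·) ⪯ Q_λ(y,·) whenever x ≤ y in S. -/

import Mathlib

open Finset

section CoreDefs

/-- The Hasse diagram of a poset, as a simple graph: edges are covering pairs. -/
def hasse (S : Type*) [PartialOrder S] : SimpleGraph S where
  Adj x y := x ⋖ y ∨ y ⋖ x
  symm := ⟨fun _ _ h => Or.symm h⟩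
  loopless := ⟨fun x h => lt_irrefl x (h.elim CovBy.lt CovBy.lt)⟩

/-- A poset is acyclic if its Hasse diagram is a forest. -/
def PosetAcyclic (S : Type*) [PartialOrder S] : Prop := (hasse S).IsAcyclic

/-- A poset is connected if its Hasse diagram is connected. -/
def PosetConnected (S : Type*) [PartialOrder S] : Prop := (hasse S).Connected

variable {S A : Type*}

/-- `P ⪯ Q` : stochastic domination, `P U ≤ Q U` for every up-set `U`. -/
def StochLE [PartialOrder S] [Fintype S] (P Q : S → ℝ) : Prop :=
  ∀ U : Finset S, IsUpperSet (U : Set S) → ∑ x ∈ U, P x ≤ ∑ x ∈ U, Q x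

/-- A system of nonnegative measures on `S` with common total mass `p`. -/
def IsMeasureSystem [Fintype S] (P : A → S → ℝ) (p : ℝ) : Prop :=
  (∀ α x, 0 ≤ P α x) ∧ ∀ α, ∑ x, P α x = p

/-- A system indexed by a poset is stochastically monotone if it is
compatible with the stochastic ordering. -/
def StochMonoSystem [PartialOrder A] [PartialOrder S] [Fintype S] (P : A → S → ℝ) : Prop :=
  ∀ α β : A, α ≤ β → StochLE (P α) (P β)

/-- A system is realizably monotone if it is the system of marginals of a
nonnegative weight supported on monotone maps from `A` to `S`. -/
def RealizablyMono [PartialOrder A] [PartialOrder S] [Fintype A] [Fintype S]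
    [DecidableEq A] [DecidableEq S] (P : A → S → ℝ) : Prop :=
  ∃ μ : (A → S) → ℝ, (∀ h, 0 ≤ μ h) ∧ (∀ h, μ h ≠ 0 → Monotone h) ∧
    ∀ (α : A) (x : S), ∑ h ∈ univ.filter (fun h : A → S => h α = x), μ h = P α x

/-- The unit point mass at `x`. -/
def pointMass [DecidableEq S] (x : S) : S → ℝ := fun y => if y = x then 1 else 0

end CoreDefs
section GenDefs

variable {S : Type*} [Fintype S] [DecidableEq S]

/-- A generator (Q-matrix) on a finite set. -/
def IsGenerator (L : Matrix S S ℝ) : Prop :=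
  (∀ x y : S, x ≠ y → 0 ≤ L x y) ∧ ∀ x : S, ∑ y : S, L x y = 0

/-- The transition semigroup `P_t = exp (t L)`. -/
noncomputable def transP (L : Matrix S S ℝ) (t : ℝ) : Matrix S S ℝ :=
  NormedSpace.exp (t • L)

/-- The transition semigroup is stochastically monotone. -/
def SemigroupStochMono [PartialOrder S] (L : Matrix S S ℝ) : Prop :=
  ∀ t : ℝ, 0 ≤ t → ∀ x y : S, x ≤ y → StochLE (transP L t x) (transP L t y)

/-- `L` admits a monotone representation: `L x y = ∑ γ h` over monotone
non-identity maps `h` with `h x = y`, for `x ≠ y`. -/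
def MonotoneRep [PartialOrder S] (L : Matrix S S ℝ) : Prop :=
  ∃ γ : (S → S) → ℝ, (∀ h, 0 ≤ γ h) ∧ (∀ h, γ h ≠ 0 → Monotone h ∧ h ≠ id) ∧
    ∀ x y : S, x ≠ y → L x y = ∑ h ∈ Finset.univ.filter (fun h : S → S => h x = y), γ h

end GenDefs

/-! If `Q_λ` is stochastically monotone, so is each power `Q_λ ^ n`: a row-stochastic monotone
matrix maps monotone functions to monotone functions, and `y ↦ Q_λ ^ n (y, U)` is monotone for an
up-set `U`. Since `L = λ (Q_λ - I)`, `P_t = e^{-λt} ∑ (λt)^n / n! • Q_λ ^ n` is a nonnegative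
combination and limit of such powers, hence monotone.

Conversely, for `x ≤ y` both inside or both outside an up-set `U`, `P_t(y, U) - P_t(x, U)` is
nonnegative and vanishes at `t = 0`, so its derivative `L(y, U) - L(x, U)` there is nonnegative.
When `x ∉ U ∋ y` instead, `L(x, U) ≤ -L(x, x) ≤ λ*` and `L(y, U) ≥ L(y, y) ≥ -λ*`, so `Q_λ` is
monotone for `λ = 2 λ*`. -/

theorem sum_mul_eq_sum_mul_max_add {S : Type*} [Fintype S] (R g : S → ℝ) {a c : ℝ} (hca : c ≤ a)
    (hg : ∀ x, g x = c ∨ a ≤ g x) :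
    ∑ x, R x * g x = ∑ x, R x * max (g x) a + (c - a) * ∑ x, R x
      + (a - c) * ∑ x ∈ univ.filter (fun x => a ≤ g x), R x := by
  rw [sum_filter, mul_sum, mul_sum, ← sum_add_distrib, ← sum_add_distrib]
  refine sum_congr rfl fun x _ => ?_
  rcases hg x with hx | hx
  · rcases eq_or_lt_of_le hca with h | h
    · simp [hx, h]
    · simp only [hx, not_le.mpr h, max_eq_right h.le, if_false]
      ring
  · simp only [max_eq_left hx, if_pos hx]
    ring

namespace StochLE

variable {S : Type*} [PartialOrder S] [Fintype S] {P Q : S → ℝ}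

theorem sum_mul_le_sum_mul_of_monotone (hPQ : StochLE P Q) (hmass : ∑ x, P x = ∑ x, Q x)
    {g : S → ℝ} (hg : Monotone g) : ∑ x, P x * g x ≤ ∑ x, Q x * g x := by
  classical
  -- Induction on the values of `g` above a lower bound `c`, raising `c` to the least value `a`.
  suffices key : ∀ V : Finset ℝ, ∀ c : ℝ, (∀ v ∈ V, c ≤ v) → ∀ g : S → ℝ, Monotone g →
      (∀ x, g x ∈ insert c V) → ∑ x, P x * g x ≤ ∑ x, Q x * g x by
    obtain ⟨c, hc⟩ := (univ.image g).bddBelow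
    exact key _ c (fun v hv => hc hv) g hg fun x =>
      mem_insert_of_mem (mem_image_of_mem g (mem_univ x))
  intro V
  induction V using Finset.induction_on_min with
  | empty =>
    intro c _ g _ hgc
    have hconst : ∀ x, g x = c := fun x => by simpa using hgc x
    simp only [hconst, ← sum_mul, hmass, le_refl]
  | insert a V haV ih =>
    intro c hc g hg hgV
    have hca : c ≤ a := hc a (mem_insert_self a V)
    have hvalues (x : S) : g x = c ∨ g x = a ∨ g x ∈ V := by simpa using hgV x
    have hgap (x : S) : g x = c ∨ a ≤ g x := by
      rcases hvalues x with h | h | h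
      exacts [.inl h, .inr h.ge, .inr (haV _ h).le]
    have hmax : ∑ x, P x * max (g x) a ≤ ∑ x, Q x * max (g x) a := by
      refine ih a (fun v hv => (haV v hv).le) _ (fun x y hxy => max_le_max (hg hxy) le_rfl)
        fun x => ?_
      rcases hvalues x with h | h | h
      · simp [h, hca]
      · simp [h]
      · simp [max_eq_left (haV _ h).le, h]
    have hup : ∑ x ∈ univ.filter (fun x => a ≤ g x), P x ≤
        ∑ x ∈ univ.filter (fun x => a ≤ g x), Q x :=
      hPQ _ fun x y hxy hx => by simpa using (show a ≤ g x by simpa using hx).trans (hg hxy)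
    rw [sum_mul_eq_sum_mul_max_add P g hca hgap, sum_mul_eq_sum_mul_max_add Q g hca hgap, hmass]
    linarith [mul_le_mul_of_nonneg_left hup (sub_nonneg.mpr hca)]

end StochLE

section Uniformization

variable {S : Type*} [DecidableEq S]

noncomputable def uniformization (L : Matrix S S ℝ) (lam : ℝ) : Matrix S S ℝ :=
  Matrix.of fun x z => (if x = z then 1 else 0) + L x z / lam

theorem sum_uniformization (L : Matrix S S ℝ) (lam : ℝ) (U : Finset S) (x : S) :
    ∑ z ∈ U, uniformization L lam x z = (if x ∈ U then 1 else 0) + (∑ z ∈ U, L x z) / lam := by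
  simp only [uniformization, Matrix.of_apply, sum_add_distrib, sum_ite_eq, sum_div]

theorem smul_uniformization_sub_one (L : Matrix S S ℝ) {lam : ℝ} (hlam : lam ≠ 0) (t : ℝ) :
    (t * lam) • (uniformization L lam - 1) = t • L := by
  ext x z
  by_cases h : x = z <;> simp [uniformization, h] <;> field_simp

variable [Fintype S]

namespace IsGenerator

variable {L : Matrix S S ℝ} (hL : IsGenerator L)
include hL

theorem sum_le_neg_diag {U : Finset S} {x : S} (hx : x ∉ U) : ∑ z ∈ U, L x z ≤ -L x x := by
  have hsub : U ⊆ univ.erase x := fun z hz => mem_erase.mpr ⟨fun h => hx (h ▸ hz), mem_univ z⟩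
  calc ∑ z ∈ U, L x z ≤ ∑ z ∈ univ.erase x, L x z :=
        sum_le_sum_of_subset_of_nonneg hsub fun z hz _ => hL.1 x z (ne_of_mem_erase hz).symm
    _ = -L x x := by rw [sum_erase_eq_sub (mem_univ x), hL.2 x, zero_sub]

theorem diag_le_sum {U : Finset S} {x : S} (hx : x ∈ U) : L x x ≤ ∑ z ∈ U, L x z := by
  rw [← add_sum_erase U _ hx, le_add_iff_nonneg_right]
  exact sum_nonneg fun z hz => hL.1 x z (ne_of_mem_erase hz).symm

theorem sum_uniformization_row (lam : ℝ) (x : S) : ∑ z, uniformization L lam x z = 1 := by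
  simp [sum_uniformization, hL.2 x]

end IsGenerator

theorem transP_eq_smul_exp_uniformization (L : Matrix S S ℝ) {lam : ℝ} (hlam : lam ≠ 0) (t : ℝ) :
    transP L t = Real.exp (-(t * lam)) • NormedSpace.exp ((t * lam) • uniformization L lam) := by
  open scoped Matrix.Norms.Operator in
  have hscalar (r : ℝ) : NormedSpace.exp (r • (1 : Matrix S S ℝ)) = Real.exp r • 1 := by
    simp only [← Algebra.algebraMap_eq_smul_one, Real.exp_eq_exp_ℝ]
    exact (NormedSpace.algebraMap_exp_comm r).symm
  have hcomm : Commute ((-(t * lam)) • (1 : Matrix S S ℝ)) ((t * lam) • uniformization L lam) :=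
    (Commute.one_left _).smul_left _
  rw [transP, ← smul_uniformization_sub_one L hlam, smul_sub, sub_eq_neg_add, ← neg_smul,
    Matrix.exp_add_of_commute _ _ hcomm, hscalar, smul_one_mul]

theorem hasDerivAt_transP_zero (L : Matrix S S ℝ) : HasDerivAt (transP L) L 0 := by
  open scoped Matrix.Norms.Operator in
  have h := hasDerivAt_exp_smul_const' (𝕂 := ℝ) L 0
  rw [zero_smul, NormedSpace.exp_zero, mul_one] at h
  exact h

end Uniformization

section MonotoneMatrices

variable {S : Type*} [Fintype S]

noncomputable def rowMassGap (U : Finset S) (x y : S) : Matrix S S ℝ →L[ℝ] ℝ :=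
  LinearMap.toContinuousLinearMap
    (∑ z ∈ U, (Matrix.entryLinearMap ℝ ℝ y z - Matrix.entryLinearMap ℝ ℝ x z))

theorem rowMassGap_apply (U : Finset S) (x y : S) (M : Matrix S S ℝ) :
    rowMassGap U x y M = ∑ z ∈ U, M y z - ∑ z ∈ U, M x z := by
  simp [rowMassGap, sum_sub_distrib]

variable [PartialOrder S] {M N Q : Matrix S S ℝ}

/-- Stochastic monotonicity is cut out by the continuous linear functionals `rowMassGap`, so it is
preserved by limits. -/
theorem stochMonoSystem_iff_rowMassGap_nonneg : StochMonoSystem M ↔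
    ∀ x y, x ≤ y → ∀ U : Finset S, IsUpperSet (U : Set S) → 0 ≤ rowMassGap U x y M := by
  simp only [rowMassGap_apply, sub_nonneg]
  rfl

theorem StochMonoSystem.smul (hM : StochMonoSystem M) {r : ℝ} (hr : 0 ≤ r) :
    StochMonoSystem (r • M : Matrix S S ℝ) := by
  intro x y hxy U hU
  simp only [Matrix.smul_apply, smul_eq_mul, ← mul_sum]
  exact mul_le_mul_of_nonneg_left (hM x y hxy U hU) hr

theorem StochMonoSystem.mul (hrow : ∀ x y, ∑ z, M x z = ∑ z, M y z) (hM : StochMonoSystem M)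
    (hN : StochMonoSystem N) : StochMonoSystem (M * N : Matrix S S ℝ) := by
  intro x y hxy U hU
  have hmass (w : S) : ∑ z ∈ U, (M * N) w z = ∑ v, M w v * ∑ z ∈ U, N v z := by
    simp only [Matrix.mul_apply, mul_sum]
    exact sum_comm
  change ∑ z ∈ U, (M * N) x z ≤ ∑ z ∈ U, (M * N) y z
  rw [hmass, hmass]
  exact (hM x y hxy).sum_mul_le_sum_mul_of_monotone (hrow x y) fun v w hvw => hN v w hvw U hU

variable [DecidableEq S]

theorem stochMonoSystem_one : StochMonoSystem (1 : Matrix S S ℝ) := by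
  intro x y hxy U hU
  simp only [Matrix.one_apply, sum_ite_eq]
  by_cases hx : x ∈ U
  · have hy : y ∈ U := hU hxy hx
    simp [hx, hy]
  · split_ifs <;> norm_num

theorem StochMonoSystem.pow (hrow : ∀ x y, ∑ z, Q x z = ∑ z, Q y z) (hQ : StochMonoSystem Q)
    (n : ℕ) : StochMonoSystem (Q ^ n : Matrix S S ℝ) := by
  induction n with
  | zero => simpa using stochMonoSystem_one
  | succ n ih => rw [pow_succ']; exact hQ.mul hrow ih

theorem StochMonoSystem.exp_smul (hrow : ∀ x y, ∑ z, Q x z = ∑ z, Q y z)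
    (hQ : StochMonoSystem Q) {c : ℝ} (hc : 0 ≤ c) :
    StochMonoSystem (NormedSpace.exp (c • Q) : Matrix S S ℝ) := by
  rw [stochMonoSystem_iff_rowMassGap_nonneg]
  intro x y hxy U hU
  open scoped Matrix.Norms.Operator in
  have hseries := (NormedSpace.exp_series_hasSum_exp' (𝕂 := ℝ) (c • Q)).mapL (rowMassGap U x y)
  refine hseries.nonneg fun n => ?_
  rw [smul_pow, smul_smul]
  exact stochMonoSystem_iff_rowMassGap_nonneg.mp ((hQ.pow hrow n).smul (by positivity)) x y hxy U hU

end MonotoneMatrices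

theorem HasDerivAt.nonneg_of_isMinOn_Ici {f : ℝ → ℝ} {f' a : ℝ} (hf : HasDerivAt f f' a)
    (hmin : IsMinOn f (Set.Ici a) a) : 0 ≤ f' := by
  have hcone : (1 : ℝ) ∈ posTangentConeAt (Set.Ici a) a :=
    mem_posTangentConeAt_of_segment_subset
      ((convex_Ici a).segment_subset Set.self_mem_Ici (by simp))
  simpa using hmin.localize.hasFDerivWithinAt_nonneg hf.hasFDerivAt.hasFDerivWithinAt hcone

section StochMono

variable {S : Type*} [PartialOrder S] [Fintype S] [DecidableEq S] {L : Matrix S S ℝ}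

def GeneratorStochMono (L : Matrix S S ℝ) : Prop :=
  ∀ x y, x ≤ y → ∀ U : Finset S, IsUpperSet (U : Set S) → (x ∈ U ↔ y ∈ U) →
    ∑ z ∈ U, L x z ≤ ∑ z ∈ U, L y z

theorem SemigroupStochMono.generatorStochMono (h : SemigroupStochMono L) :
    GeneratorStochMono L := by
  intro x y hxy U hU hiff
  set gap := fun t => rowMassGap U x y (transP L t)
  have hderiv : HasDerivAt gap (rowMassGap U x y L) 0 := by
    open scoped Matrix.Norms.Operator in
    exact (rowMassGap U x y).hasFDerivAt.comp_hasDerivAt (0 : ℝ) (hasDerivAt_transP_zero L)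
  have hgap0 : gap 0 = 0 := by
    simp [gap, transP, rowMassGap_apply, Matrix.one_apply, hiff]
  have hmin : IsMinOn gap (Set.Ici 0) 0 := fun t ht => by
    show gap 0 ≤ gap t
    rw [hgap0]
    exact stochMonoSystem_iff_rowMassGap_nonneg.mp (h t ht) x y hxy U hU
  simpa [rowMassGap_apply] using hderiv.nonneg_of_isMinOn_Ici hmin

theorem stochMonoSystem_uniformization (hL : IsGenerator L) (hgen : GeneratorStochMono L)
    {lam : ℝ} (hlam : 0 < lam) (hdiag : ∀ x, -L x x ≤ lam / 2) :
    StochMonoSystem (uniformization L lam) := by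
  intro x y hxy U hU
  change ∑ z ∈ U, uniformization L lam x z ≤ ∑ z ∈ U, uniformization L lam y z
  rw [sum_uniformization, sum_uniformization]
  by_cases hx : x ∈ U
  · have hy : y ∈ U := hU hxy hx
    simp only [if_pos hx, if_pos hy, add_le_add_iff_left]
    exact div_le_div_of_nonneg_right (hgen x y hxy U hU (iff_of_true hx hy)) hlam.le
  by_cases hy : y ∈ U
  · -- the rates of entering `U` from `x` and of leaving it from `y` are each at most `lam / 2`
    rw [if_neg hx, if_pos hy, zero_add, div_le_iff₀ hlam, add_mul, one_mul,
      div_mul_cancel₀ _ hlam.ne']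
    linarith [hL.sum_le_neg_diag hx, hL.diag_le_sum hy, hdiag x, hdiag y]
  · simp only [if_neg hx, if_neg hy, zero_add]
    exact div_le_div_of_nonneg_right (hgen x y hxy U hU (iff_of_false hx hy)) hlam.le

theorem semigroupStochMono_of_uniformization (hL : IsGenerator L) {lam : ℝ} (hlam : 0 < lam)
    (hQ : StochMonoSystem (uniformization L lam)) : SemigroupStochMono L := by
  intro t ht
  change StochMonoSystem (transP L t)
  have hrow (x y : S) : ∑ z, uniformization L lam x z = ∑ z, uniformization L lam y z := by
    rw [hL.sum_uniformization_row, hL.sum_uniformization_row]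
  rw [transP_eq_smul_exp_uniformization L hlam.ne' t]
  exact (hQ.exp_smul hrow (by positivity)).smul (Real.exp_pos _).le

end StochMono

/-- `P_t = exp (t L)` is stochastically monotone iff the
stochastic matrix `Q_λ = I + L/λ` is stochastically monotone for some
`λ ≥ λ* = max_x (-L x x) > 0`. -/
theorem semigroup_stochMono_iff_uniformized_stochMono
    (S : Type) [PartialOrder S] [Fintype S] [DecidableEq S] [Nonempty S]
    (L : Matrix S S ℝ) (hL : IsGenerator L)
    (lamStar : ℝ) (hstar : lamStar = Finset.univ.sup' Finset.univ_nonempty (fun x : S => - L x x))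
    (hpos : 0 < lamStar) :
    SemigroupStochMono L ↔
      ∃ lam : ℝ, lamStar ≤ lam ∧
        ∀ x y : S, x ≤ y →
          StochLE (fun z => (if x = z then (1 : ℝ) else 0) + L x z / lam)
                  (fun z => (if y = z then (1 : ℝ) else 0) + L y z / lam) := by
  have hdiag (x : S) : -L x x ≤ lamStar := hstar ▸ le_sup' (fun x : S => -L x x) (mem_univ x)
  constructor
  · intro h
    exact ⟨2 * lamStar, by linarith, stochMonoSystem_uniformization hL h.generatorStochMono
      (by linarith) fun x => by linarith [hdiag x]⟩
  · rintro ⟨lam, hlam, hQ⟩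
    exact semigroupStochMono_of_uniformization hL (hpos.trans_le hlam) hQ
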